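/- For real numbers X ≥ 1, Y > 0, k ≥ 1, and complex u with real part 0, the difference quotient satisfies |((X+Y)^{(1/k)(1/2+iu)} − X^{(1/k)(1/2+iu)}) / (1/2+iu)| ≪ min( Y X^{1/(2k)−1}, X^{1/(2k)} / (|u|+1) ). -/

import Mathlib

/-!
Write `α = (1/2 + iu)/k`, so that `Re α = 1/(2k)` and `|α| ≤ |1/2 + iu|`. The derivative of
`t ↦ t^α` is `α t^(α-1)`, of modulus at most `|α| X^(Re α - 1)` on `[X, X + Y]`, so the mean value
inequality bounds the numerator by `|1/2 + iu| Y X^(1/(2k) - 1)`. Alternatively, each of the two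
powers has modulus at most `(2X)^(1/(2k)) ≤ 2 X^(1/(2k))`, and `|1/2 + iu| ≥ (|u| + 1)/3`.
-/

open Complex

theorem norm_ofReal_add_cpow_sub_ofReal_cpow_le_mul {α : ℂ} (hα : α.re ≤ 1) {x y : ℝ}
    (hx : 0 < x) (hy : 0 ≤ y) :
    ‖((x + y : ℝ) : ℂ) ^ α - (x : ℂ) ^ α‖ ≤ ‖α‖ * x ^ (α.re - 1) * y := by
  rcases eq_or_ne α 0 with rfl | hα0
  · simp
  have hderiv : ∀ t ∈ Set.Icc x (x + y), HasDerivWithinAt (fun t : ℝ => (t : ℂ) ^ α)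
      (α * (t : ℂ) ^ (α - 1)) (Set.Icc x (x + y)) t := fun t ht =>
    (hasDerivAt_ofReal_cpow_const (hx.trans_le ht.1).ne' hα0).hasDerivWithinAt
  have hbound : ∀ t ∈ Set.Icc x (x + y), ‖α * (t : ℂ) ^ (α - 1)‖ ≤ ‖α‖ * x ^ (α.re - 1) := by
    intro t ht
    rw [norm_mul, norm_cpow_eq_rpow_re_of_pos (hx.trans_le ht.1), sub_re, one_re]
    exact mul_le_mul_of_nonneg_left (Real.rpow_le_rpow_of_nonpos hx ht.1 (by linarith))
      (norm_nonneg α)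
  simpa [abs_of_nonneg hy] using
    (convex_Icc x (x + y)).norm_image_sub_le_of_norm_hasDerivWithin_le hderiv hbound
      (Set.left_mem_Icc.2 (by linarith)) (Set.right_mem_Icc.2 (by linarith))

theorem Real.add_rpow_le_two_mul_rpow {a x y : ℝ} (ha₀ : 0 ≤ a) (ha₁ : a ≤ 1) (hx : 0 ≤ x)
    (hy : 0 ≤ y) (hyx : y ≤ x) : (x + y) ^ a ≤ 2 * x ^ a :=
  calc (x + y) ^ a ≤ (2 * x) ^ a := by gcongr; linarith
    _ = 2 ^ a * x ^ a := Real.mul_rpow zero_le_two hx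
    _ ≤ 2 * x ^ a := by gcongr; exact Real.rpow_le_self_of_one_le one_le_two ha₁

theorem norm_ofReal_add_cpow_sub_ofReal_cpow_le_three_mul {α : ℂ} (hα₀ : 0 ≤ α.re)
    (hα₁ : α.re ≤ 1) {x y : ℝ} (hx : 0 < x) (hy : 0 ≤ y) (hyx : y ≤ x) :
    ‖((x + y : ℝ) : ℂ) ^ α - (x : ℂ) ^ α‖ ≤ 3 * x ^ α.re :=
  calc ‖((x + y : ℝ) : ℂ) ^ α - (x : ℂ) ^ α‖ ≤ (x + y) ^ α.re + x ^ α.re := by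
        rw [← norm_cpow_eq_rpow_re_of_pos (by linarith), ← norm_cpow_eq_rpow_re_of_pos hx]
        exact norm_sub_le _ _
    _ ≤ 2 * x ^ α.re + x ^ α.re := by
        gcongr; exact Real.add_rpow_le_two_mul_rpow hα₀ hα₁ hx.le hy hyx
    _ = 3 * x ^ α.re := by ring

theorem abs_add_one_le_three_mul_norm_half_add_mul_I (u : ℝ) :
    |u| + 1 ≤ 3 * ‖(1 / 2 + u * I : ℂ)‖ := by
  have hre := abs_re_le_norm (1 / 2 + u * I : ℂ)
  have him := abs_im_le_norm (1 / 2 + u * I : ℂ)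
  norm_num at hre him
  linarith

theorem norm_ofReal_add_cpow_sub_ofReal_cpow_div_le_min {α s : ℂ} (hα₀ : 0 ≤ α.re)
    (hα₁ : α.re ≤ 1) (hαs : ‖α‖ ≤ ‖s‖) (hs : s ≠ 0) {x y : ℝ} (hx : 0 < x) (hy : 0 ≤ y)
    (hyx : y ≤ x) :
    ‖(((x + y : ℝ) : ℂ) ^ α - (x : ℂ) ^ α) / s‖ ≤
      min (y * x ^ (α.re - 1)) (3 * x ^ α.re / ‖s‖) := by
  rw [norm_div, le_min_iff, div_le_iff₀ (norm_pos_iff.2 hs)]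
  constructor
  · calc ‖((x + y : ℝ) : ℂ) ^ α - (x : ℂ) ^ α‖ ≤ ‖α‖ * x ^ (α.re - 1) * y :=
          norm_ofReal_add_cpow_sub_ofReal_cpow_le_mul hα₁ hx hy
      _ ≤ ‖s‖ * x ^ (α.re - 1) * y := by gcongr
      _ = y * x ^ (α.re - 1) * ‖s‖ := by ring
  · gcongr
    exact norm_ofReal_add_cpow_sub_ofReal_cpow_le_three_mul hα₀ hα₁ hx hy hyx

/-- Bound for the difference quotient of complex powers on the half line. -/
theorem cpow_difference_quotient_bound :
    ∃ C : ℝ, 0 < C ∧ ∀ (X Y : ℝ) (k : ℕ) (u : ℝ),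
      1 ≤ X → 0 < Y → Y ≤ X → 1 ≤ k →
      ‖((X + Y : ℂ) ^ ((1 / k : ℂ) * (1 / 2 + u * Complex.I)) -
          (X : ℂ) ^ ((1 / k : ℂ) * (1 / 2 + u * Complex.I))) /
            (1 / 2 + u * Complex.I)‖
        ≤ C * min (Y * X ^ ((1 : ℝ) / (2 * k) - 1))
            (X ^ ((1 : ℝ) / (2 * k)) / (|u| + 1)) := by
  refine ⟨9, by norm_num, fun X Y k u hX hY hYX hk => ?_⟩
  have hk : (1 : ℝ) ≤ k := by exact_mod_cast hk
  have hu := abs_add_one_le_three_mul_norm_half_add_mul_I u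
  set s : ℂ := 1 / 2 + u * I
  have hs : 0 < ‖s‖ := by linarith [abs_nonneg u]
  have hα_re : ((1 / k : ℂ) * s).re = 1 / (2 * k) := by simp [s]
  have hα_norm : ‖(1 / k : ℂ) * s‖ ≤ ‖s‖ := by
    rw [norm_mul, norm_div, norm_one, norm_natCast]
    exact mul_le_of_le_one_left (norm_nonneg s) (by rw [div_le_one (by positivity)]; exact hk)
  have hbound := norm_ofReal_add_cpow_sub_ofReal_cpow_div_le_min (by rw [hα_re]; positivity)
    (by rw [hα_re, div_le_one (by positivity)]; linarith) hα_norm (norm_pos_iff.1 hs)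
    (by linarith) hY.le hYX
  rw [hα_re] at hbound
  push_cast at hbound
  refine hbound.trans ?_
  rw [mul_min_of_nonneg _ _ (by norm_num : (0 : ℝ) ≤ 9)]
  refine min_le_min (le_mul_of_one_le_left (by positivity) (by norm_num)) ?_
  rw [mul_div_assoc', div_le_div_iff₀ hs (by positivity)]
  nlinarith [Real.rpow_nonneg (by linarith : 0 ≤ X) (1 / (2 * k : ℝ))]
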